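/- arXiv:2105.04451 — 6 statements merged into one kernel-verified Lean document; each statement's English description precedes it below -/
import Mathlib

section
/- For any weights a > 0 and b > 0, the generalized Binder loss L_binder is a quasimetric on the set of partitions of {1,…,n}: it satisfies the identity of indiscernibles (L_binder(c, ĉ) = 0 if and only if c and ĉ induce the same partition) and the triangle inequality (L_binder(x, y) + L_binder(y, z) ≥ L_binder(x, z) for all clusterings x, y, z). -/
open Finset

/-- Generalized Binder loss with weights `a` and `b`, in cluster-label form:
`L(c, d) = ∑_{i<j} (a·𝟙{c i = c j}·𝟙{d i ≠ d j} + b·𝟙{c i ≠ c j}·𝟙{d i = d j})`. -/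
noncomputable def binderLoss (n : ℕ) (a b : ℝ) (c d : Fin n → ℕ) : ℝ :=
  ∑ i : Fin n, ∑ j : Fin n, if i < j then
    a * (if c i = c j then (1:ℝ) else 0) * (if d i ≠ d j then (1:ℝ) else 0)
    + b * (if c i ≠ c j then (1:ℝ) else 0) * (if d i = d j then (1:ℝ) else 0)
  else 0

lemma binder_term_nonneg (n : ℕ) (a b : ℝ) (ha : 0 < a) (hb : 0 < b)
    (c d : Fin n → ℕ) (i j : Fin n) :
    0 ≤ (if i < j then
      a * (if c i = c j then (1:ℝ) else 0) * (if d i ≠ d j then (1:ℝ) else 0)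
      + b * (if c i ≠ c j then (1:ℝ) else 0) * (if d i = d j then (1:ℝ) else 0)
    else 0) := by
  by_cases hij : i < j <;> by_cases h1 : c i = c j <;> by_cases h2 : d i = d j <;>
    simp [hij, h1, h2] <;> linarith

/-- For any weights `a, b > 0`, the generalized Binder loss is a quasimetric on partitions of
`{1,…,n}`: it is zero iff the two label vectors induce the same partition (identity of
indiscernibles), and it satisfies the triangle inequality. -/
theorem binder_is_quasimetric (n : ℕ) (a b : ℝ) (ha : 0 < a) (hb : 0 < b) :
    (∀ c d : Fin n → ℕ,
      binderLoss n a b c d = 0 ↔ (∀ i j : Fin n, c i = c j ↔ d i = d j)) ∧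
    (∀ x y z : Fin n → ℕ,
      binderLoss n a b x z ≤ binderLoss n a b x y + binderLoss n a b y z) := by
  constructor
  · intro c d
    constructor
    · intro h
      have h1 : ∀ i ∈ (univ : Finset (Fin n)), (∑ j : Fin n, if i < j then
          a * (if c i = c j then (1:ℝ) else 0) * (if d i ≠ d j then (1:ℝ) else 0)
          + b * (if c i ≠ c j then (1:ℝ) else 0) * (if d i = d j then (1:ℝ) else 0)
        else 0) = 0 := by
        rw [← Finset.sum_eq_zero_iff_of_nonneg]
        · exact h
        · intro i _
          exact Finset.sum_nonneg (fun j _ => binder_term_nonneg n a b ha hb c d i j)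
      have h2 : ∀ i j : Fin n, i < j → (c i = c j ↔ d i = d j) := by
        intro i j hij
        have := (Finset.sum_eq_zero_iff_of_nonneg
          (fun j _ => binder_term_nonneg n a b ha hb c d i j)).mp
          (h1 i (mem_univ i)) j (mem_univ j)
        by_cases h1' : c i = c j <;> by_cases h2' : d i = d j <;>
          simp [hij, h1', h2'] at this ⊢ <;> linarith
      intro i j
      rcases lt_trichotomy i j with hij | hij | hij
      · exact h2 i j hij
      · subst hij; simp
      · have := h2 j i hij
        constructor
        · intro he; exact (this.mp he.symm).symm
        · intro he; exact (this.mpr he.symm).symm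
    · intro h
      apply Finset.sum_eq_zero
      intro i _
      apply Finset.sum_eq_zero
      intro j _
      by_cases hij : i < j
      · by_cases h1 : c i = c j
        · simp [hij, h1, (h i j).mp h1]
        · simp [hij, h1, (h i j).not.mp h1]
      · simp [hij]
  · intro x y z
    unfold binderLoss
    rw [← Finset.sum_add_distrib]
    apply Finset.sum_le_sum
    intro i _
    rw [← Finset.sum_add_distrib]
    apply Finset.sum_le_sum
    intro j _
    by_cases hij : i < j
    · by_cases h1 : x i = x j <;> by_cases h2 : y i = y j <;> by_cases h3 : z i = z j <;>
        simp [hij, h1, h2, h3] <;> linarith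
    · simp [hij]
end

section
/- For any weights a > 0 and b > 0, the generalized variation of information L_GVI is a quasimetric on the set of partitions of {1,…,n}: it satisfies the identity of indiscernibles (L_GVI(ρ, ρ̂) = 0 if and only if ρ = ρ̂) and the triangle inequality (L_GVI(ρ₁, ρ₂) + L_GVI(ρ₂, ρ₃) ≥ L_GVI(ρ₁, ρ₃) for all partitions ρ₁, ρ₂, ρ₃). -/
open Finset

/-- A partition of `{1,…,n}`: a set of nonempty, pairwise disjoint clusters covering everything. -/
def IsPartition {n : ℕ} (ρ : Finset (Finset (Fin n))) : Prop :=
  (∀ S ∈ ρ, S.Nonempty) ∧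
  (∀ S ∈ ρ, ∀ T ∈ ρ, S ≠ T → Disjoint S T) ∧
  (∀ i : Fin n, ∃ S ∈ ρ, i ∈ S)

/-- Entropy of a partition: `H(ρ) = -∑_{S∈ρ} (|S|/n)·log₂(|S|/n)`. -/
noncomputable def ent {n : ℕ} (ρ : Finset (Finset (Fin n))) : ℝ :=
  - ∑ S ∈ ρ, ((S.card : ℝ) / n) * Real.logb 2 ((S.card : ℝ) / n)

/-- Joint entropy: `H(ρ, τ) = -∑_{S∈ρ} ∑_{T∈τ} (|S∩T|/n)·log₂(|S∩T|/n)` (with `0·log₂ 0 = 0`). -/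
noncomputable def jent {n : ℕ} (ρ τ : Finset (Finset (Fin n))) : ℝ :=
  - ∑ S ∈ ρ, ∑ T ∈ τ, (((S ∩ T).card : ℝ) / n) * Real.logb 2 (((S ∩ T).card : ℝ) / n)

/-- Mutual information: `I(ρ, τ) = H(ρ) + H(τ) - H(ρ, τ)`. -/
noncomputable def mi {n : ℕ} (ρ τ : Finset (Finset (Fin n))) : ℝ :=
  ent ρ + ent τ - jent ρ τ

/-- Conditional entropy: `H(ρ ∣ τ) = H(ρ, τ) - H(τ)`. -/
noncomputable def cent {n : ℕ} (ρ τ : Finset (Finset (Fin n))) : ℝ :=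
  jent ρ τ - ent τ

/-- Generalized variation of information:
`L_GVI(ρ, τ) = b·H(ρ) + a·H(τ) - (a+b)·I(ρ, τ)`. -/
noncomputable def gvi {n : ℕ} (a b : ℝ) (ρ τ : Finset (Finset (Fin n))) : ℝ :=
  b * ent ρ + a * ent τ - (a + b) * mi ρ τ

/-! Writing `X_i` for the block of `X` containing `i`, every entropy is an average over the
points: `H(X ∣ Y) = (1/n) ∑ᵢ log₂ (|Y_i| / |X_i ∩ Y_i|)`, and
`L_GVI(ρ, τ) = a·H(τ ∣ ρ) + b·H(ρ ∣ τ)`. Each summand of `H(X ∣ Y)` is nonnegative and vanishes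
exactly when `Y_i ⊆ X_i`, which gives the identity of indiscernibles. For the triangle inequality,
pointwise `H(X ∣ Z) ≤ H(X ∣ Y) + H(Y ∣ Z) - I(X; Z ∣ Y)`, and the conditional mutual information
is nonnegative by `log x ≥ 1 - 1/x` and a count over the blocks `S ∩ R ∩ T`. -/

open Real

theorem cast_card_pos {α : Type*} {s : Finset α} {a : α} (h : a ∈ s) : (0 : ℝ) < #s := by
  exact_mod_cast card_pos.2 ⟨a, h⟩

namespace Finpartition

variable {α : Type*} [DecidableEq α] {s : Finset α}

theorem sum_part {M : Type*} [AddCommMonoid M] (P : Finpartition s) {u : Finset α} (hu : u ⊆ s)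
    (f : Finset α → α → M) :
    ∑ a ∈ u, f (P.part a) a = ∑ t ∈ P.parts, ∑ a ∈ u ∩ t, f t a := by
  rw [← sum_fiberwise_of_maps_to fun a ha ↦ P.part_mem.2 (hu ha)]
  refine sum_congr rfl fun t ht ↦ ?_
  rw [← filter_mem_eq_inter]
  refine sum_congr (filter_congr fun a _ ↦ P.part_eq_iff_mem ht) fun a ha ↦ ?_
  rw [P.part_eq_of_mem ht (mem_filter.1 ha).2]

theorem sum_card_inter (P : Finpartition s) {u : Finset α} (hu : u ⊆ s) :
    ∑ t ∈ P.parts, #(u ∩ t) = #u := by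
  simp only [card_eq_sum_ones]
  exact (P.sum_part hu fun _ _ ↦ 1).symm

theorem le_iff_forall_part_subset {P Q : Finpartition s} :
    P ≤ Q ↔ ∀ a ∈ s, P.part a ⊆ Q.part a := by
  constructor
  · intro h a ha
    obtain ⟨c, hc, hPc⟩ := h (P.part_mem.2 ha)
    rwa [Q.part_eq_of_mem hc (hPc (P.mem_part ha))]
  · intro h b hb
    obtain ⟨a, hab⟩ := P.nonempty_of_mem_parts hb
    have ha : a ∈ s := P.le hb hab
    exact ⟨Q.part a, Q.part_mem.2 ha, P.part_eq_of_mem hb hab ▸ h a ha⟩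

end Finpartition

variable {n : ℕ}

theorem IsPartition.exists_finpartition {ρ : Finset (Finset (Fin n))} (hρ : IsPartition ρ) :
    ∃ P : Finpartition (univ : Finset (Fin n)), P.parts = ρ := by
  refine ⟨.ofExistsUnique ρ (fun _ _ ↦ subset_univ _) (fun i _ ↦ ?_) ?_, rfl⟩
  · obtain ⟨S, hS, hiS⟩ := hρ.2.2 i
    refine ⟨S, ⟨hS, hiS⟩, fun T ⟨hT, hiT⟩ ↦ ?_⟩
    by_contra hTS
    exact disjoint_left.1 (hρ.2.1 T hT S hS hTS) hiT hiS
  · exact fun h ↦ not_nonempty_empty (hρ.1 ∅ h)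

theorem jent_comm (ρ τ : Finset (Finset (Fin n))) : jent ρ τ = jent τ ρ := by
  unfold jent
  rw [sum_comm]
  simp_rw [inter_comm]

theorem gvi_eq_cent (a b : ℝ) (ρ τ : Finset (Finset (Fin n))) :
    gvi a b ρ τ = a * cent τ ρ + b * cent ρ τ := by
  unfold gvi mi cent
  rw [jent_comm τ ρ]
  ring

section PartitionEntropy

variable (X Y Z : Finpartition (univ : Finset (Fin n)))

theorem ent_parts_eq : ent X.parts = (∑ i, -logb 2 (#(X.part i) / n)) / n := by
  rw [X.sum_part (subset_univ _) fun t _ ↦ -logb 2 (#t / n), ent, sum_div, ← sum_neg_distrib]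
  refine sum_congr rfl fun t _ ↦ ?_
  rw [univ_inter, sum_const, nsmul_eq_mul]
  ring

theorem jent_parts_eq :
    jent X.parts Y.parts = (∑ i, -logb 2 (#(X.part i ∩ Y.part i) / n)) / n := by
  rw [X.sum_part (subset_univ _) fun S i ↦ -logb 2 (#(S ∩ Y.part i) / n), jent, sum_div,
    ← sum_neg_distrib]
  refine sum_congr rfl fun S _ ↦ ?_
  rw [Y.sum_part (subset_univ _) fun T _ ↦ -logb 2 (#(S ∩ T) / n), sum_div, ← sum_neg_distrib]
  refine sum_congr rfl fun T _ ↦ ?_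
  rw [univ_inter, sum_const, nsmul_eq_mul]
  ring

noncomputable def condInfo (i : Fin n) : ℝ :=
  logb 2 #(Y.part i) - logb 2 #(X.part i ∩ Y.part i)

theorem cent_parts_eq : cent X.parts Y.parts = (∑ i, condInfo X Y i) / n := by
  rw [cent, jent_parts_eq, ent_parts_eq, ← sub_div, ← sum_sub_distrib]
  congr 1
  refine sum_congr rfl fun i _ ↦ ?_
  have hn : (n : ℝ) ≠ 0 := by exact_mod_cast i.pos.ne'
  have hY : i ∈ Y.part i := by simp
  have hXY : i ∈ X.part i ∩ Y.part i := by simp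
  rw [logb_div (cast_card_pos hXY).ne' hn, logb_div (cast_card_pos hY).ne' hn, condInfo]
  ring

theorem condInfo_nonneg (i : Fin n) : 0 ≤ condInfo X Y i :=
  sub_nonneg.2 <| logb_le_logb_of_le one_lt_two (cast_card_pos (a := i) (by simp))
    (by exact_mod_cast card_le_card inter_subset_right)

theorem condInfo_eq_zero_iff (i : Fin n) : condInfo X Y i = 0 ↔ Y.part i ⊆ X.part i := by
  have hY : i ∈ Y.part i := by simp
  have hXY : i ∈ X.part i ∩ Y.part i := by simp
  rw [condInfo, sub_eq_zero, (logb_injOn_pos one_lt_two).eq_iff (cast_card_pos hY)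
    (cast_card_pos hXY), Nat.cast_inj, ← inter_eq_right]
  exact ⟨fun h ↦ eq_of_subset_of_card_le inter_subset_right h.le, fun h ↦ by rw [h]⟩

theorem cent_nonneg : 0 ≤ cent X.parts Y.parts := by
  rw [cent_parts_eq]
  exact div_nonneg (sum_nonneg fun i _ ↦ condInfo_nonneg X Y i) n.cast_nonneg

theorem cent_eq_zero_iff : cent X.parts Y.parts = 0 ↔ Y ≤ X := by
  rw [cent_parts_eq, Finpartition.le_iff_forall_part_subset, div_eq_zero_iff,
    sum_eq_zero_iff_of_nonneg fun i _ ↦ condInfo_nonneg X Y i]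
  simp only [mem_univ, forall_const, condInfo_eq_zero_iff]
  exact or_iff_left_of_imp fun hn i ↦ absurd (Nat.cast_eq_zero.1 hn) i.pos.ne'

-- The pointwise density of the conditional mutual information `I(X; Z ∣ Y)`.
noncomputable def condMutualInfo (i : Fin n) : ℝ :=
  logb 2 (#(Y.part i) * #(X.part i ∩ Y.part i ∩ Z.part i) /
    (#(X.part i ∩ Y.part i) * #(Y.part i ∩ Z.part i)))

theorem condInfo_le (i : Fin n) :
    condInfo X Z i ≤ condInfo X Y i + condInfo Y Z i - condMutualInfo X Y Z i := by
  have hne : ∀ {A : Finset (Fin n)}, i ∈ A → (#A : ℝ) ≠ 0 := fun h ↦ (cast_card_pos h).ne'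
  have hY : i ∈ Y.part i := by simp
  have hXY : i ∈ X.part i ∩ Y.part i := by simp
  have hYZ : i ∈ Y.part i ∩ Z.part i := by simp
  have hi : i ∈ X.part i ∩ Y.part i ∩ Z.part i := by simp
  have hXYZ : logb 2 #(X.part i ∩ Y.part i ∩ Z.part i) ≤ logb 2 #(X.part i ∩ Z.part i) :=
    logb_le_logb_of_le one_lt_two (cast_card_pos hi)
      (by exact_mod_cast card_le_card (inter_subset_inter inter_subset_left subset_rfl))
  rw [condMutualInfo, logb_div (mul_ne_zero (hne hY) (hne hi)) (mul_ne_zero (hne hXY) (hne hYZ)),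
    logb_mul (hne hY) (hne hi), logb_mul (hne hXY) (hne hYZ)]
  unfold condInfo
  linarith

theorem sum_card_inter_mul_div_le :
    ∑ i, (#(X.part i ∩ Y.part i) * #(Y.part i ∩ Z.part i) : ℝ) /
      (#(Y.part i) * #(X.part i ∩ Y.part i ∩ Z.part i)) ≤ n := by
  calc _ = ∑ S ∈ X.parts, ∑ R ∈ Y.parts, ∑ T ∈ Z.parts,
        (#(S ∩ R ∩ T) : ℝ) * (#(S ∩ R) * #(R ∩ T) / (#R * #(S ∩ R ∩ T))) := by
        rw [X.sum_part (subset_univ _) fun S i ↦ (#(S ∩ Y.part i) * #(Y.part i ∩ Z.part i) : ℝ) /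
          (#(Y.part i) * #(S ∩ Y.part i ∩ Z.part i))]
        refine sum_congr rfl fun S _ ↦ ?_
        rw [Y.sum_part (subset_univ _) fun R i ↦ (#(S ∩ R) * #(R ∩ Z.part i) : ℝ) /
          (#R * #(S ∩ R ∩ Z.part i))]
        refine sum_congr rfl fun R _ ↦ ?_
        rw [Z.sum_part (subset_univ _) fun T _ ↦ (#(S ∩ R) * #(R ∩ T) : ℝ) /
          (#R * #(S ∩ R ∩ T))]
        refine sum_congr rfl fun T _ ↦ ?_
        rw [sum_const, nsmul_eq_mul, univ_inter]
    _ ≤ ∑ S ∈ X.parts, ∑ R ∈ Y.parts, ∑ T ∈ Z.parts, (#(S ∩ R) * #(R ∩ T) : ℝ) / #R := by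
        gcongr with S _ R _ T _
        rcases eq_or_ne (#(S ∩ R ∩ T) : ℝ) 0 with h | h
        · rw [h, zero_mul]
          positivity
        · rw [← div_div, mul_div_cancel₀ _ h]
    _ = ∑ R ∈ Y.parts, (∑ S ∈ X.parts, (#(R ∩ S) : ℝ)) * (∑ T ∈ Z.parts, (#(R ∩ T) : ℝ)) / #R := by
        rw [sum_comm]
        simp_rw [sum_mul_sum, sum_div, inter_comm _ (_ : Finset (Fin n))]
    _ = ∑ R ∈ Y.parts, (#R : ℝ) := by
        simp_rw [← Nat.cast_sum, X.sum_card_inter (subset_univ _), Z.sum_card_inter (subset_univ _),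
          mul_self_div_self, Nat.cast_sum]
    _ = n := by exact_mod_cast Y.sum_card_parts.trans (card_fin n)

theorem sum_condMutualInfo_nonneg : 0 ≤ ∑ i, condMutualInfo X Y Z i := by
  set r : Fin n → ℝ := fun i ↦ (#(X.part i ∩ Y.part i) * #(Y.part i ∩ Z.part i) : ℝ) /
    (#(Y.part i) * #(X.part i ∩ Y.part i ∩ Z.part i))
  have gibbs (i : Fin n) : (1 - r i) / log 2 ≤ condMutualInfo X Y Z i := by
    have hpos : (0 : ℝ) < #(Y.part i) * #(X.part i ∩ Y.part i ∩ Z.part i) /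
        (#(X.part i ∩ Y.part i) * #(Y.part i ∩ Z.part i)) := by
      refine div_pos (mul_pos ?_ ?_) (mul_pos ?_ ?_) <;> exact cast_card_pos (a := i) (by simp)
    rw [condMutualInfo, logb, div_le_div_iff_of_pos_right (log_pos one_lt_two)]
    simpa only [r, inv_div] using one_sub_inv_le_log_of_pos hpos
  calc (0 : ℝ) ≤ (n - ∑ i, r i) / log 2 :=
        div_nonneg (sub_nonneg.2 (sum_card_inter_mul_div_le X Y Z)) (log_nonneg one_le_two)
    _ = ∑ i, (1 - r i) / log 2 := by rw [← sum_div, sum_sub_distrib, sum_const, card_fin, nsmul_one]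
    _ ≤ ∑ i, condMutualInfo X Y Z i := sum_le_sum fun i _ ↦ gibbs i

theorem cent_triangle : cent X.parts Z.parts ≤ cent X.parts Y.parts + cent Y.parts Z.parts := by
  rw [cent_parts_eq, cent_parts_eq, cent_parts_eq, ← add_div, ← sum_add_distrib]
  gcongr ?_ / _
  calc ∑ i, condInfo X Z i
      ≤ ∑ i, (condInfo X Y i + condInfo Y Z i - condMutualInfo X Y Z i) :=
        sum_le_sum fun i _ ↦ condInfo_le X Y Z i
    _ ≤ ∑ i, (condInfo X Y i + condInfo Y Z i) := by
        rw [sum_sub_distrib]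
        linarith [sum_condMutualInfo_nonneg X Y Z]

end PartitionEntropy

/-- For any weights `a, b > 0`, the generalized variation of information is a quasimetric on the
set of partitions of `{1,…,n}`: it satisfies the identity of indiscernibles and the triangle
inequality. -/
theorem gvi_is_quasimetric (n : ℕ) (a b : ℝ) (ha : 0 < a) (hb : 0 < b) :
    (∀ ρ τ : Finset (Finset (Fin n)), IsPartition ρ → IsPartition τ →
      (gvi a b ρ τ = 0 ↔ ρ = τ)) ∧
    (∀ ρ₁ ρ₂ ρ₃ : Finset (Finset (Fin n)),
      IsPartition ρ₁ → IsPartition ρ₂ → IsPartition ρ₃ →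
      gvi a b ρ₁ ρ₃ ≤ gvi a b ρ₁ ρ₂ + gvi a b ρ₂ ρ₃) := by
  refine ⟨fun ρ τ hρ hτ ↦ ?_, fun ρ₁ ρ₂ ρ₃ h₁ h₂ h₃ ↦ ?_⟩
  · obtain ⟨P, rfl⟩ := IsPartition.exists_finpartition hρ
    obtain ⟨Q, rfl⟩ := IsPartition.exists_finpartition hτ
    rw [gvi_eq_cent, add_eq_zero_iff_of_nonneg (mul_nonneg ha.le (cent_nonneg Q P))
      (mul_nonneg hb.le (cent_nonneg P Q)), mul_eq_zero, mul_eq_zero, or_iff_right ha.ne',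
      or_iff_right hb.ne', cent_eq_zero_iff, cent_eq_zero_iff, ← le_antisymm_iff,
      Finpartition.ext_iff]
  · obtain ⟨P₁, rfl⟩ := IsPartition.exists_finpartition h₁
    obtain ⟨P₂, rfl⟩ := IsPartition.exists_finpartition h₂
    obtain ⟨P₃, rfl⟩ := IsPartition.exists_finpartition h₃
    have h₃₁ := cent_triangle P₃ P₂ P₁
    have h₁₃ := cent_triangle P₁ P₂ P₃
    simp only [gvi_eq_cent]
    linarith [mul_le_mul_of_nonneg_left h₃₁ ha.le, mul_le_mul_of_nonneg_left h₁₃ hb.le]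
end

section
/- For any weights a > 0 and b > 0 and any three partitions ρ₁, ρ₂, ρ₃ of {1,…,n}, the generalized variation of information satisfies the triangle inequality L_GVI(ρ₁, ρ₂) + L_GVI(ρ₂, ρ₃) ≥ L_GVI(ρ₁, ρ₃). -/
open Finset

lemma sum_inter_card {n : ℕ} {ρ : Finset (Finset (Fin n))} (h : IsPartition ρ)
    (A : Finset (Fin n)) : ∑ S ∈ ρ, (S ∩ A).card = A.card := by
  obtain ⟨-, hdisj, hcov⟩ := h
  rw [← Finset.card_biUnion]
  · congr 1
    ext i
    simp only [Finset.mem_biUnion, Finset.mem_inter]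
    constructor
    · rintro ⟨S, _, _, hiA⟩; exact hiA
    · intro hiA; obtain ⟨S, hS, hiS⟩ := hcov i; exact ⟨S, hS, hiS, hiA⟩
  · intro x hx y hy hxy
    exact Finset.disjoint_of_subset_left Finset.inter_subset_left <|
      Finset.disjoint_of_subset_right Finset.inter_subset_left (hdisj x hx y hy hxy)

lemma sum_pr {n : ℕ} {ρ : Finset (Finset (Fin n))} (h : IsPartition ρ)
    (A : Finset (Fin n)) : ∑ S ∈ ρ, ((S ∩ A).card : ℝ) / n = (A.card : ℝ) / n := by
  rw [← Finset.sum_div, ← Nat.cast_sum, sum_inter_card h A]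

lemma negMulLog_sum_le {ι : Type*} (s : Finset ι) (f : ι → ℝ) (hf : ∀ i ∈ s, 0 ≤ f i) :
    Real.negMulLog (∑ i ∈ s, f i) ≤ ∑ i ∈ s, Real.negMulLog (f i) := by
  have key : ∑ i ∈ s, f i * Real.log (f i) ≤ (∑ i ∈ s, f i) * Real.log (∑ i ∈ s, f i) := by
    rw [Finset.sum_mul]
    apply Finset.sum_le_sum
    intro i hi
    rcases eq_or_lt_of_le (hf i hi) with h0 | h0
    · simp [← h0]
    · exact mul_le_mul_of_nonneg_left
        (Real.log_le_log h0 (Finset.single_le_sum hf hi)) h0.le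
  calc Real.negMulLog (∑ i ∈ s, f i) = -((∑ i ∈ s, f i) * Real.log (∑ i ∈ s, f i)) := by
        rw [Real.negMulLog]; ring
  _ ≤ -(∑ i ∈ s, f i * Real.log (f i)) := neg_le_neg key
  _ = ∑ i ∈ s, Real.negMulLog (f i) := by
        rw [← Finset.sum_neg_distrib]
        exact Finset.sum_congr rfl fun i _ => by rw [Real.negMulLog]; ring

/-- natural-log entropy -/
noncomputable def nent {n : ℕ} (ρ : Finset (Finset (Fin n))) : ℝ :=
  ∑ S ∈ ρ, Real.negMulLog ((S.card : ℝ) / n)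

/-- natural-log joint entropy -/
noncomputable def njent {n : ℕ} (ρ τ : Finset (Finset (Fin n))) : ℝ :=
  ∑ S ∈ ρ, ∑ T ∈ τ, Real.negMulLog (((S ∩ T).card : ℝ) / n)

lemma part_empty {ρ : Finset (Finset (Fin 0))} (h : IsPartition ρ) : ρ = ∅ := by
  rw [Finset.eq_empty_iff_forall_notMem]
  intro S hS
  obtain ⟨i, -⟩ := h.1 S hS
  exact i.elim0

lemma cent_triangle_nat {n : ℕ} {ρ₁ ρ₂ ρ₃ : Finset (Finset (Fin n))}
    (h₁ : IsPartition ρ₁) (h₂ : IsPartition ρ₂) (h₃ : IsPartition ρ₃) :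
    njent ρ₁ ρ₃ ≤ njent ρ₁ ρ₂ + njent ρ₂ ρ₃ - nent ρ₂ := by
  rcases Nat.eq_zero_or_pos n with rfl | hn0
  · rw [part_empty h₁, part_empty h₂]
    simp [njent, nent]
  have hn : (0 : ℝ) < n := by exact_mod_cast hn0
  -- abbreviations as plain expressions
  -- sum identities
  have sumU : ∀ (A : Finset (Fin n)), ∑ U ∈ ρ₃, ((A ∩ U).card : ℝ) / n = (A.card : ℝ) / n := by
    intro A
    rw [← sum_pr h₃ A]
    exact Finset.sum_congr rfl fun U _ => by rw [Finset.inter_comm]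
  have sumS : ∀ (A : Finset (Fin n)), ∑ S ∈ ρ₁, ((S ∩ A).card : ℝ) / n = (A.card : ℝ) / n :=
    fun A => sum_pr h₁ A
  have sumT : ∀ (A : Finset (Fin n)), ∑ T ∈ ρ₂, ((T ∩ A).card : ℝ) / n = (A.card : ℝ) / n :=
    fun A => sum_pr h₂ A
  have sumT1 : ∑ T ∈ ρ₂, ((T.card : ℝ) / n) = 1 := by
    have := sum_pr h₂ Finset.univ
    simp only [Finset.inter_univ, Finset.card_univ, Fintype.card_fin] at this
    rw [this, div_self hn.ne']
  have hp2pos : ∀ T ∈ ρ₂, (0 : ℝ) < (T.card : ℝ) / n := by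
    intro T hT
    have := Finset.card_pos.mpr (h₂.1 T hT)
    positivity
  -- Step A : njent ρ₁ ρ₃ ≤ E3
  have stepA : njent ρ₁ ρ₃ ≤
      ∑ S ∈ ρ₁, ∑ T ∈ ρ₂, ∑ U ∈ ρ₃, Real.negMulLog (((S ∩ T ∩ U).card : ℝ) / n) := by
    rw [njent]
    have : ∀ S ∈ ρ₁, ∑ U ∈ ρ₃, Real.negMulLog (((S ∩ U).card : ℝ) / n) ≤
        ∑ U ∈ ρ₃, ∑ T ∈ ρ₂, Real.negMulLog (((S ∩ T ∩ U).card : ℝ) / n) := by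
      intro S _
      apply Finset.sum_le_sum
      intro U _
      have hrw : ((S ∩ U).card : ℝ) / n = ∑ T ∈ ρ₂, ((S ∩ T ∩ U).card : ℝ) / n := by
        rw [← sum_pr h₂ (S ∩ U)]
        exact Finset.sum_congr rfl fun T _ => by
          congr 2
          rw [Finset.inter_comm T (S ∩ U), Finset.inter_assoc, Finset.inter_comm U T,
            ← Finset.inter_assoc]
      rw [hrw]
      exact negMulLog_sum_le _ _ fun T _ => by positivity
    calc ∑ S ∈ ρ₁, ∑ U ∈ ρ₃, Real.negMulLog (((S ∩ U).card : ℝ) / n)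
        ≤ ∑ S ∈ ρ₁, ∑ U ∈ ρ₃, ∑ T ∈ ρ₂, Real.negMulLog (((S ∩ T ∩ U).card : ℝ) / n) :=
          Finset.sum_le_sum this
      _ = ∑ S ∈ ρ₁, ∑ T ∈ ρ₂, ∑ U ∈ ρ₃, Real.negMulLog (((S ∩ T ∩ U).card : ℝ) / n) :=
          Finset.sum_congr rfl fun S _ => Finset.sum_comm
  -- Step B : E3 ≤ njent ρ₁ ρ₂ + njent ρ₂ ρ₃ - nent ρ₂
  have stepB : ∑ S ∈ ρ₁, ∑ T ∈ ρ₂, ∑ U ∈ ρ₃, Real.negMulLog (((S ∩ T ∩ U).card : ℝ) / n)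
      ≤ njent ρ₁ ρ₂ + njent ρ₂ ρ₃ - nent ρ₂ := by
    rw [njent, njent, nent]
    -- the "gain" function
    set g : Finset (Fin n) → Finset (Fin n) → Finset (Fin n) → ℝ := fun S T U =>
      (((S ∩ T ∩ U).card : ℝ) / n) *
        (Real.log (((S ∩ T).card : ℝ) / n) + Real.log (((T ∩ U).card : ℝ) / n)
          - Real.log ((T.card : ℝ) / n) - Real.log (((S ∩ T ∩ U).card : ℝ) / n)) with hg
    set q : Finset (Fin n) → Finset (Fin n) → Finset (Fin n) → ℝ := fun S T U =>
      (((S ∩ T).card : ℝ) / n) * (((T ∩ U).card : ℝ) / n) / ((T.card : ℝ) / n) with hq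
    -- pointwise bound g ≤ q - p
    have hpoint : ∀ S ∈ ρ₁, ∀ T ∈ ρ₂, ∀ U ∈ ρ₃,
        g S T U ≤ q S T U - ((S ∩ T ∩ U).card : ℝ) / n := by
      intro S _ T hT U _
      have hp2 := hp2pos T hT
      rcases eq_or_lt_of_le (show (0:ℝ) ≤ ((S ∩ T ∩ U).card : ℝ) / n by positivity) with h0 | h0
      · have hq0 : (0:ℝ) ≤ q S T U := by rw [hq]; positivity
        rw [hg]; simp only [← h0]
        linarith
      · have hc12 : ((S ∩ T ∩ U).card : ℝ) / n ≤ ((S ∩ T).card : ℝ) / n :=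
          div_le_div_of_nonneg_right
            (Nat.cast_le.mpr (Finset.card_le_card (Finset.inter_subset_left))) hn.le
        have hc23 : ((S ∩ T ∩ U).card : ℝ) / n ≤ ((T ∩ U).card : ℝ) / n :=
          div_le_div_of_nonneg_right
            (Nat.cast_le.mpr (Finset.card_le_card
              (Finset.inter_subset_inter Finset.inter_subset_right (subset_refl U)))) hn.le
        have h12 : (0:ℝ) < ((S ∩ T).card : ℝ) / n := lt_of_lt_of_le h0 hc12
        have h23 : (0:ℝ) < ((T ∩ U).card : ℝ) / n := lt_of_lt_of_le h0 hc23
        have hqpos : (0:ℝ) < q S T U := by rw [hq]; positivity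
        have hlog : Real.log (((S ∩ T).card : ℝ) / n) + Real.log (((T ∩ U).card : ℝ) / n)
            - Real.log ((T.card : ℝ) / n) - Real.log (((S ∩ T ∩ U).card : ℝ) / n)
            = Real.log (q S T U / (((S ∩ T ∩ U).card : ℝ) / n)) := by
          rw [hq, Real.log_div hqpos.ne' h0.ne', Real.log_div (by positivity) hp2.ne',
            Real.log_mul h12.ne' h23.ne']
        rw [hg]
        dsimp only
        rw [hlog]
        have hle : Real.log (q S T U / (((S ∩ T ∩ U).card : ℝ) / n))
            ≤ q S T U / (((S ∩ T ∩ U).card : ℝ) / n) - 1 :=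
          Real.log_le_sub_one_of_pos (by positivity)
        have := mul_le_mul_of_nonneg_left hle h0.le
        have heq : ((S ∩ T ∩ U).card : ℝ) / n * (q S T U / (((S ∩ T ∩ U).card : ℝ) / n) - 1)
            = q S T U - ((S ∩ T ∩ U).card : ℝ) / n := by
          rw [mul_sub, mul_one, mul_comm, div_mul_cancel₀ _ h0.ne']
        linarith
    -- sum of q is 1
    have sumq : ∑ S ∈ ρ₁, ∑ T ∈ ρ₂, ∑ U ∈ ρ₃, q S T U = 1 := by
      have hin : ∀ S, ∀ T ∈ ρ₂, ∑ U ∈ ρ₃, q S T U = ((S ∩ T).card : ℝ) / n := by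
        intro S T hT
        have : ∀ U, q S T U
            = (((S ∩ T).card : ℝ) / n / ((T.card : ℝ) / n)) * (((T ∩ U).card : ℝ) / n) := by
          intro U; rw [hq]; ring
        rw [Finset.sum_congr rfl fun U _ => this U, ← Finset.mul_sum, sumU T,
          div_mul_cancel₀ _ (hp2pos T hT).ne']
      calc ∑ S ∈ ρ₁, ∑ T ∈ ρ₂, ∑ U ∈ ρ₃, q S T U
          = ∑ S ∈ ρ₁, ∑ T ∈ ρ₂, ((S ∩ T).card : ℝ) / n :=
            Finset.sum_congr rfl fun S _ => Finset.sum_congr rfl fun T hT => hin S T hT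
        _ = ∑ T ∈ ρ₂, ∑ S ∈ ρ₁, ((S ∩ T).card : ℝ) / n := Finset.sum_comm
        _ = ∑ T ∈ ρ₂, ((T.card : ℝ) / n) := Finset.sum_congr rfl fun T _ => sumS T
        _ = 1 := sumT1
    -- sum of p is 1
    have sump : ∑ S ∈ ρ₁, ∑ T ∈ ρ₂, ∑ U ∈ ρ₃, ((S ∩ T ∩ U).card : ℝ) / n = 1 := by
      calc ∑ S ∈ ρ₁, ∑ T ∈ ρ₂, ∑ U ∈ ρ₃, ((S ∩ T ∩ U).card : ℝ) / n
          = ∑ S ∈ ρ₁, ∑ T ∈ ρ₂, ((S ∩ T).card : ℝ) / n :=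
            Finset.sum_congr rfl fun S _ => Finset.sum_congr rfl fun T _ => sumU (S ∩ T)
        _ = ∑ T ∈ ρ₂, ∑ S ∈ ρ₁, ((S ∩ T).card : ℝ) / n := Finset.sum_comm
        _ = ∑ T ∈ ρ₂, ((T.card : ℝ) / n) := Finset.sum_congr rfl fun T _ => sumS T
        _ = 1 := sumT1
    -- key : total gain ≤ 0
    have key : ∑ S ∈ ρ₁, ∑ T ∈ ρ₂, ∑ U ∈ ρ₃, g S T U ≤ 0 := by
      have h1 : ∑ S ∈ ρ₁, ∑ T ∈ ρ₂, ∑ U ∈ ρ₃, g S T U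
          ≤ ∑ S ∈ ρ₁, ∑ T ∈ ρ₂, ∑ U ∈ ρ₃, (q S T U - ((S ∩ T ∩ U).card : ℝ) / n) :=
        Finset.sum_le_sum fun S hS => Finset.sum_le_sum fun T hT =>
          Finset.sum_le_sum fun U hU => hpoint S hS T hT U hU
      have h2 : ∑ S ∈ ρ₁, ∑ T ∈ ρ₂, ∑ U ∈ ρ₃, (q S T U - ((S ∩ T ∩ U).card : ℝ) / n) = 0 := by
        simp only [Finset.sum_sub_distrib]
        rw [sumq, sump]
        ring
      linarith
    -- linear identity : RHS - LHS = -(total gain)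
    have e12 : ∑ S ∈ ρ₁, ∑ T ∈ ρ₂, Real.negMulLog (((S ∩ T).card : ℝ) / n)
        = ∑ S ∈ ρ₁, ∑ T ∈ ρ₂, ∑ U ∈ ρ₃,
            (((S ∩ T ∩ U).card : ℝ) / n) * (- Real.log (((S ∩ T).card : ℝ) / n)) := by
      refine Finset.sum_congr rfl fun S _ => Finset.sum_congr rfl fun T _ => ?_
      rw [← Finset.sum_mul, sumU (S ∩ T), Real.negMulLog]
      ring
    have e23 : ∑ T ∈ ρ₂, ∑ U ∈ ρ₃, Real.negMulLog (((T ∩ U).card : ℝ) / n)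
        = ∑ S ∈ ρ₁, ∑ T ∈ ρ₂, ∑ U ∈ ρ₃,
            (((S ∩ T ∩ U).card : ℝ) / n) * (- Real.log (((T ∩ U).card : ℝ) / n)) := by
      rw [Finset.sum_comm (s := ρ₁) (t := ρ₂)]
      refine Finset.sum_congr rfl fun T _ => ?_
      rw [Finset.sum_comm (s := ρ₁) (t := ρ₃)]
      refine Finset.sum_congr rfl fun U _ => ?_
      have : ∑ S ∈ ρ₁, ((S ∩ T ∩ U).card : ℝ) / n = ((T ∩ U).card : ℝ) / n := by
        rw [← sumS (T ∩ U)]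
        exact Finset.sum_congr rfl fun S _ => by rw [Finset.inter_assoc]
      rw [← Finset.sum_mul, this, Real.negMulLog]
      ring
    have e2 : ∑ T ∈ ρ₂, Real.negMulLog ((T.card : ℝ) / n)
        = ∑ S ∈ ρ₁, ∑ T ∈ ρ₂, ∑ U ∈ ρ₃,
            (((S ∩ T ∩ U).card : ℝ) / n) * (- Real.log ((T.card : ℝ) / n)) := by
      rw [Finset.sum_comm (s := ρ₁) (t := ρ₂)]
      refine Finset.sum_congr rfl fun T _ => ?_
      have : ∑ S ∈ ρ₁, ∑ U ∈ ρ₃, ((S ∩ T ∩ U).card : ℝ) / n = (T.card : ℝ) / n := by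
        rw [Finset.sum_congr rfl fun S _ => sumU (S ∩ T), sumS T]
      rw [show ∑ S ∈ ρ₁, ∑ U ∈ ρ₃,
          (((S ∩ T ∩ U).card : ℝ) / n) * (- Real.log ((T.card : ℝ) / n))
          = (∑ S ∈ ρ₁, ∑ U ∈ ρ₃, ((S ∩ T ∩ U).card : ℝ) / n)
              * (- Real.log ((T.card : ℝ) / n)) by
        rw [Finset.sum_mul]
        exact Finset.sum_congr rfl fun S _ => by rw [Finset.sum_mul]]
      rw [this, Real.negMulLog]
      ring
    have e3 : ∑ S ∈ ρ₁, ∑ T ∈ ρ₂, ∑ U ∈ ρ₃, Real.negMulLog (((S ∩ T ∩ U).card : ℝ) / n)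
        = ∑ S ∈ ρ₁, ∑ T ∈ ρ₂, ∑ U ∈ ρ₃,
            (((S ∩ T ∩ U).card : ℝ) / n) * (- Real.log (((S ∩ T ∩ U).card : ℝ) / n)) :=
      Finset.sum_congr rfl fun S _ => Finset.sum_congr rfl fun T _ =>
        Finset.sum_congr rfl fun U _ => by rw [Real.negMulLog]; ring
    have lid : (∑ S ∈ ρ₁, ∑ T ∈ ρ₂, Real.negMulLog (((S ∩ T).card : ℝ) / n))
        + (∑ T ∈ ρ₂, ∑ U ∈ ρ₃, Real.negMulLog (((T ∩ U).card : ℝ) / n))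
        - (∑ T ∈ ρ₂, Real.negMulLog ((T.card : ℝ) / n))
        - (∑ S ∈ ρ₁, ∑ T ∈ ρ₂, ∑ U ∈ ρ₃, Real.negMulLog (((S ∩ T ∩ U).card : ℝ) / n))
        = - ∑ S ∈ ρ₁, ∑ T ∈ ρ₂, ∑ U ∈ ρ₃, g S T U := by
      rw [e12, e23, e2, e3]
      simp only [← Finset.sum_neg_distrib, ← Finset.sum_add_distrib, ← Finset.sum_sub_distrib]
      refine Finset.sum_congr rfl fun S _ => Finset.sum_congr rfl fun T _ =>
        Finset.sum_congr rfl fun U _ => ?_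
      rw [hg]
      ring
    linarith
  linarith

lemma ent_eq {n : ℕ} (ρ : Finset (Finset (Fin n))) : ent ρ = nent ρ / Real.log 2 := by
  rw [ent, nent, Finset.sum_div, ← Finset.sum_neg_distrib]
  refine Finset.sum_congr rfl fun S _ => ?_
  rw [Real.logb, Real.negMulLog]
  ring

lemma jent_eq {n : ℕ} (ρ τ : Finset (Finset (Fin n))) : jent ρ τ = njent ρ τ / Real.log 2 := by
  rw [jent, njent, Finset.sum_div, ← Finset.sum_neg_distrib]
  refine Finset.sum_congr rfl fun S _ => ?_
  rw [Finset.sum_div, ← Finset.sum_neg_distrib]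
  refine Finset.sum_congr rfl fun T _ => ?_
  rw [Real.logb, Real.negMulLog]
  ring

/-- For any weights `a, b > 0` and any three partitions of `{1,…,n}`, the generalized variation
of information satisfies the triangle inequality. -/
theorem gvi_triangle (n : ℕ) (a b : ℝ) (ha : 0 < a) (hb : 0 < b)
    (ρ₁ ρ₂ ρ₃ : Finset (Finset (Fin n)))
    (h₁ : IsPartition ρ₁) (h₂ : IsPartition ρ₂) (h₃ : IsPartition ρ₃) :
    gvi a b ρ₁ ρ₃ ≤ gvi a b ρ₁ ρ₂ + gvi a b ρ₂ ρ₃ := by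
  have key := cent_triangle_nat h₁ h₂ h₃
  have l2 : (0:ℝ) < Real.log 2 := Real.log_pos one_lt_two
  have keyb : jent ρ₁ ρ₃ ≤ jent ρ₁ ρ₂ + jent ρ₂ ρ₃ - ent ρ₂ := by
    rw [jent_eq, jent_eq, jent_eq, ent_eq, ← add_div, ← sub_div]
    exact div_le_div_of_nonneg_right key l2.le
  have hab : (0:ℝ) < a + b := by linarith
  have h := mul_le_mul_of_nonneg_left keyb hab.le
  simp only [gvi, mi]
  nlinarith [h]
end

section
/- Let c⁽¹⁾,…,c⁽ᴴ⁾ be clusterings of {1,…,n} and define π̂_{ij} = (1/H)·Σ_{h=1}^H 𝟙{c_i⁽ʰ⁾ = c_j⁽ʰ⁾}. Then for any clustering ĉ, the least-squares clustering criterion satisfies Σ_{i<j} ( 𝟙{ĉ_i = ĉ_j} − π̂_{ij} )² = (1/H)·Σ_{h=1}^H L_binder(c⁽ʰ⁾, ĉ) + Σ_{i<j} ( π̂_{ij}² − π̂_{ij} ), where L_binder uses weights a = b = 1; in particular, since the last sum does not depend on ĉ, minimizing the least-squares criterion over ĉ is equivalent to minimizing the average Binder loss with a = b = 1. -/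
open Finset

/-- Empirical pairwise similarity: `π̂ᵢⱼ = (1/H)·∑ₕ 𝟙{cₕ i = cₕ j}`. -/
noncomputable def psim {n H : ℕ} (c : Fin H → Fin n → ℕ) (i j : Fin n) : ℝ :=
  (1 / H : ℝ) * ∑ h : Fin H, if c h i = c h j then (1:ℝ) else 0

lemma binder_swap (n H : ℕ) (c : Fin H → Fin n → ℕ) (d : Fin n → ℕ) :
    (1 / H : ℝ) * ∑ h : Fin H, binderLoss n 1 1 (c h) d
      = ∑ i : Fin n, ∑ j : Fin n, if i < j then
          (1 / H : ℝ) * ∑ h : Fin H,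
            ((if c h i = c h j then (1:ℝ) else 0) * (if d i ≠ d j then (1:ℝ) else 0)
            + (if c h i ≠ c h j then (1:ℝ) else 0) * (if d i = d j then (1:ℝ) else 0))
      else 0 := by
  simp only [binderLoss, one_mul, Finset.mul_sum]
  rw [Finset.sum_comm]
  refine Finset.sum_congr rfl fun i _ => ?_
  rw [Finset.sum_comm]
  refine Finset.sum_congr rfl fun j _ => ?_
  by_cases hij : i < j <;> simp [hij, Finset.mul_sum]

lemma pair_key {n H : ℕ} (hH : 0 < H) (c : Fin H → Fin n → ℕ) (d : Fin n → ℕ)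
    (i j : Fin n) :
    ((if d i = d j then (1:ℝ) else 0) - psim c i j) ^ 2
      = (1 / H : ℝ) * (∑ h : Fin H,
          ((if c h i = c h j then (1:ℝ) else 0) * (if d i ≠ d j then (1:ℝ) else 0)
          + (if c h i ≠ c h j then (1:ℝ) else 0) * (if d i = d j then (1:ℝ) else 0)))
        + (psim c i j ^ 2 - psim c i j) := by
  have hH' : (H : ℝ) ≠ 0 := Nat.cast_ne_zero.mpr hH.ne'
  by_cases hd : d i = d j
  · have : (∑ h : Fin H,
        ((if c h i = c h j then (1:ℝ) else 0) * (if d i ≠ d j then (1:ℝ) else 0)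
        + (if c h i ≠ c h j then (1:ℝ) else 0) * (if d i = d j then (1:ℝ) else 0)))
        = (H : ℝ) - ∑ h : Fin H, (if c h i = c h j then (1:ℝ) else 0) := by
      have step : ∀ h : Fin H,
          ((if c h i = c h j then (1:ℝ) else 0) * (if d i ≠ d j then (1:ℝ) else 0)
          + (if c h i ≠ c h j then (1:ℝ) else 0) * (if d i = d j then (1:ℝ) else 0))
          = 1 - (if c h i = c h j then (1:ℝ) else 0) := fun h => by
        by_cases hc : c h i = c h j <;> simp [hc, hd]
      rw [Finset.sum_congr rfl (fun h _ => step h), Finset.sum_sub_distrib]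
      simp
    rw [this, hd]
    simp only [if_pos]
    unfold psim
    field_simp
    ring
  · have : (∑ h : Fin H,
        ((if c h i = c h j then (1:ℝ) else 0) * (if d i ≠ d j then (1:ℝ) else 0)
        + (if c h i ≠ c h j then (1:ℝ) else 0) * (if d i = d j then (1:ℝ) else 0)))
        = ∑ h : Fin H, (if c h i = c h j then (1:ℝ) else 0) := by
      refine Finset.sum_congr rfl fun h _ => ?_
      simp [hd]
    rw [this, if_neg hd]
    unfold psim
    ring

/-- Given clusterings `c 1, …, c H` of `{1,…,n}` with empirical pairwise similarity `π̂`, the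
least-squares clustering criterion satisfies
`∑_{i<j} (𝟙{dᵢ=dⱼ} - π̂ᵢⱼ)² = (1/H)·∑ₕ L_binder(cₕ, d) + ∑_{i<j} (π̂ᵢⱼ² - π̂ᵢⱼ)` with `a = b = 1`;
in particular minimizing the least-squares criterion over `d` is equivalent to minimizing the
average Binder loss with `a = b = 1`. -/
theorem least_squares_criterion_eq_average_binder (n H : ℕ) (hH : 0 < H)
    (c : Fin H → Fin n → ℕ) :
    (∀ d : Fin n → ℕ,
      (∑ i : Fin n, ∑ j : Fin n, if i < j then
          ((if d i = d j then (1:ℝ) else 0) - psim c i j) ^ 2 else 0)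
        = (1 / H : ℝ) * ∑ h : Fin H, binderLoss n 1 1 (c h) d
          + ∑ i : Fin n, ∑ j : Fin n, if i < j then (psim c i j ^ 2 - psim c i j) else 0) ∧
    (∀ d₁ d₂ : Fin n → ℕ,
      (∑ i : Fin n, ∑ j : Fin n, if i < j then
          ((if d₁ i = d₁ j then (1:ℝ) else 0) - psim c i j) ^ 2 else 0)
        ≤ (∑ i : Fin n, ∑ j : Fin n, if i < j then
          ((if d₂ i = d₂ j then (1:ℝ) else 0) - psim c i j) ^ 2 else 0)
      ↔ (1 / H : ℝ) * ∑ h : Fin H, binderLoss n 1 1 (c h) d₁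
          ≤ (1 / H : ℝ) * ∑ h : Fin H, binderLoss n 1 1 (c h) d₂) := by
  have main : ∀ d : Fin n → ℕ,
      (∑ i : Fin n, ∑ j : Fin n, if i < j then
          ((if d i = d j then (1:ℝ) else 0) - psim c i j) ^ 2 else 0)
        = (1 / H : ℝ) * ∑ h : Fin H, binderLoss n 1 1 (c h) d
          + ∑ i : Fin n, ∑ j : Fin n, if i < j then (psim c i j ^ 2 - psim c i j) else 0 := by
    intro d
    rw [binder_swap, ← Finset.sum_add_distrib]
    refine Finset.sum_congr rfl fun i _ => ?_
    rw [← Finset.sum_add_distrib]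
    refine Finset.sum_congr rfl fun j _ => ?_
    by_cases hij : i < j
    · simp only [hij, if_pos]
      exact pair_key hH c d i j
    · simp [hij]
  refine ⟨main, fun d₁ d₂ => ?_⟩
  rw [main d₁, main d₂]
  exact add_le_add_iff_right _
end

section
/- Let c⁽¹⁾,…,c⁽ᴴ⁾ be clusterings of {1,…,n}, let σ ∈ {1,…,n}, and let ĉ be a clustering of {1,…,n}∖{σ} with clusters T₁,…,T_q; set T_{q+1} = ∅. For 1 ≤ j ≤ q+1, let ĉ_j denote the clustering of {1,…,n} obtained from ĉ by adding σ to T_j (to a new singleton cluster when j = q+1). Then for any weights a > 0 and b > 0 there is a constant K, not depending on j, such that for every j, (1/H)·Σ_{h=1}^H L_binder(c⁽ʰ⁾, ĉ_j) = K + (1/H)·( b·H·|T_j| − (a+b)·Σ_{h=1}^H m_{h,j} ), where m_{h,j} = |{ i ∈ T_j : c_i⁽ʰ⁾ = c_σ⁽ʰ⁾ }|. -/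
open Finset

lemma binder_diff (n : ℕ) (a b : ℝ) (cc : Fin n → ℕ) (σ : Fin n)
    (T : Finset (Fin n)) (hσT : σ ∉ T)
    (dj dl : Fin n → ℕ)
    (hoff : ∀ i, i ≠ σ → dj i = dl i)
    (hmem : ∀ i, i ≠ σ → (dj σ = dj i ↔ i ∈ T))
    (hl : ∀ i, i ≠ σ → dl σ ≠ dl i) :
    binderLoss n a b cc dj = binderLoss n a b cc dl
      + (b * T.card - (a+b) * ((T.filter (fun i => cc i = cc σ)).card : ℝ)) := by
  classical
  set F : (Fin n → ℕ) → Fin n → Fin n → ℝ := fun d i k => if i < k then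
    a * (if cc i = cc k then (1:ℝ) else 0) * (if d i ≠ d k then (1:ℝ) else 0)
    + b * (if cc i ≠ cc k then (1:ℝ) else 0) * (if d i = d k then (1:ℝ) else 0)
    else 0 with hF
  set g : Fin n → Fin n → ℝ := fun i k => F dj i k - F dl i k with hg
  have hzero : ∀ i k : Fin n, i ≠ σ → k ≠ σ → g i k = 0 := by
    intro i k hi hk
    simp only [hg, hF, hoff i hi, hoff k hk, sub_self]
  have hdiag : ∀ i : Fin n, g i i = 0 := by intro i; simp [hg, hF]
  have hpair : ∀ i : Fin n, i ≠ σ → g σ i + g i σ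
      = if i ∈ T then b * (if cc i ≠ cc σ then (1:ℝ) else 0)
          - a * (if cc i = cc σ then (1:ℝ) else 0) else 0 := by
    intro i hi
    have h1 := hmem i hi
    have h2 := hl i hi
    rcases lt_or_gt_of_ne (Ne.symm hi) with h | h
    · have hni : ¬ i < σ := asymm h
      simp only [hg, hF, if_pos h, if_neg hni]
      by_cases hT : i ∈ T
      · have hdj : dj σ = dj i := h1.mpr hT
        by_cases hc : cc σ = cc i
        · simp [hdj, h2, hc, hT]
        · simp [hdj, h2, hc, Ne.symm hc, hT]
      · have hdj : dj σ ≠ dj i := fun e => hT (h1.mp e)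
        by_cases hc : cc σ = cc i
        · simp [hdj, h2, hc, hT]
        · simp [hdj, h2, hc, Ne.symm hc, hT]
    · have hni : ¬ σ < i := asymm h
      have h1' : dj i = dj σ ↔ i ∈ T := by rw [eq_comm]; exact h1
      have h2' : dl i ≠ dl σ := fun e => h2 e.symm
      simp only [hg, hF, if_pos h, if_neg hni]
      by_cases hT : i ∈ T
      · have hdj : dj i = dj σ := h1'.mpr hT
        by_cases hc : cc i = cc σ
        · simp [hdj, h2', hc, hT]
        · simp [hdj, h2', hc, hT]
      · have hdj : dj i ≠ dj σ := fun e => hT (h1'.mp e)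
        by_cases hc : cc i = cc σ
        · simp [hdj, h2', hc, hT]
        · simp [hdj, h2', hc, hT]
  have hsum : ∑ i : Fin n, ∑ k : Fin n, g i k
      = ∑ i ∈ univ.erase σ, (g σ i + g i σ) := by
    rw [← Finset.add_sum_erase (univ) (fun i => ∑ k : Fin n, g i k) (mem_univ σ)]
    have h1 : ∑ k : Fin n, g σ k = ∑ k ∈ univ.erase σ, g σ k := by
      rw [← Finset.add_sum_erase (univ) (fun k => g σ k) (mem_univ σ), hdiag, zero_add]
    have h2 : ∀ i ∈ univ.erase σ, ∑ k : Fin n, g i k = g i σ := by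
      intro i hi
      exact Finset.sum_eq_single σ (fun k _ hk => hzero i k (Finset.ne_of_mem_erase hi) hk)
        (fun h => absurd (mem_univ σ) h)
    rw [h1, Finset.sum_congr rfl h2, ← Finset.sum_add_distrib]
  have hsum2 : ∑ i ∈ univ.erase σ, (g σ i + g i σ)
      = ∑ i ∈ T, (b * (if cc i ≠ cc σ then (1:ℝ) else 0)
          - a * (if cc i = cc σ then (1:ℝ) else 0)) := by
    rw [Finset.sum_congr rfl (fun i hi => hpair i (Finset.ne_of_mem_erase hi))]
    rw [Finset.sum_ite_mem]
    congr 1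
    rw [Finset.inter_eq_right]
    intro x hx
    exact Finset.mem_erase.mpr ⟨fun e => hσT (e ▸ hx), mem_univ x⟩
  have hcard := Finset.card_filter_add_card_filter_not
    (s := T) (p := fun i => cc i = cc σ)
  have hsum3 : ∑ i ∈ T, (b * (if cc i ≠ cc σ then (1:ℝ) else 0)
        - a * (if cc i = cc σ then (1:ℝ) else 0))
      = b * T.card - (a+b) * ((T.filter (fun i => cc i = cc σ)).card : ℝ) := by
    rw [Finset.sum_sub_distrib, ← Finset.mul_sum, ← Finset.mul_sum]
    rw [Finset.sum_boole, Finset.sum_boole]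
    have : ((T.filter (fun i => ¬ cc i = cc σ)).card : ℝ)
        = (T.card : ℝ) - ((T.filter (fun i => cc i = cc σ)).card : ℝ) := by
      have := hcard
      push_cast [← this]
      ring
    simp only [ne_eq]
    rw [this]
    ring
  have hfin : binderLoss n a b cc dj - binderLoss n a b cc dl
      = b * T.card - (a+b) * ((T.filter (fun i => cc i = cc σ)).card : ℝ) := by
    have : binderLoss n a b cc dj - binderLoss n a b cc dl
        = ∑ i : Fin n, ∑ k : Fin n, g i k := by
      simp only [hg, binderLoss, hF, Finset.sum_sub_distrib]
    rw [this, hsum, hsum2, hsum3]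
  linarith

/-- One-item reallocation shortcut for the generalized Binder loss. Let `c 1, …, c H` be
clusterings of `{1,…,n}`, let `σ` be an item, and let `T 0, …, T (q-1)` be the clusters of a
clustering of `{1,…,n} ∖ {σ}` (with `T q = ∅`, the extra index standing for a new cluster), with
labels `lab` such that `lab i = j` whenever `i ∈ T j`. Letting the candidate clustering `d j`
allocate `σ` to cluster `j` (a new singleton cluster when `j = q`), there is a constant `K`, not
depending on `j`, such that for every `j`,
`(1/H)·∑ₕ L_binder(cₕ, d j) = K + (1/H)·(b·H·|T j| - (a+b)·∑ₕ m(h,j))`,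
where `m(h,j) = |{i ∈ T j : cₕ i = cₕ σ}|`. -/
theorem binder_reallocation_shortcut (n H q : ℕ) (hH : 0 < H) (a b : ℝ)
    (ha : 0 < a) (hb : 0 < b)
    (c : Fin H → Fin n → ℕ) (σ : Fin n)
    (T : Fin (q + 1) → Finset (Fin n))
    (hlast : T (Fin.last q) = ∅)
    (hdisj : ∀ j k : Fin (q + 1), j ≠ k → Disjoint (T j) (T k))
    (hne : ∀ j : Fin (q + 1), j ≠ Fin.last q → (T j).Nonempty)
    (hnotin : ∀ j : Fin (q + 1), σ ∉ T j)
    (hcover : ∀ i : Fin n, i ≠ σ → ∃ j : Fin (q + 1), i ∈ T j)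
    (lab : Fin n → ℕ)
    (hlab : ∀ i : Fin n, ∀ j : Fin (q + 1), i ∈ T j → lab i = (j : ℕ)) :
    ∃ K : ℝ, ∀ j : Fin (q + 1),
      (1 / H : ℝ) * ∑ h : Fin H,
          binderLoss n a b (c h) (fun i => if i = σ then (j : ℕ) else lab i)
        = K + (1 / H : ℝ) * (b * H * ((T j).card : ℝ)
            - (a + b) * ∑ h : Fin H,
                (((T j).filter (fun i => c h i = c h σ)).card : ℝ)) := by
    classical
  set dl : Fin n → ℕ := fun i => if i = σ then ((Fin.last q : Fin (q+1)) : ℕ) else lab i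
    with hdl
  have fact1 : ∀ i : Fin n, i ≠ σ → ∀ k : Fin (q+1), (lab i = (k:ℕ) ↔ i ∈ T k) := by
    intro i hi k
    constructor
    · intro hlk
      obtain ⟨m, hm⟩ := hcover i hi
      have hm' := hlab i m hm
      have hmk : m = k := Fin.val_inj.mp (by omega)
      exact hmk ▸ hm
    · exact hlab i k
  refine ⟨(1 / H : ℝ) * ∑ h : Fin H, binderLoss n a b (c h) dl, ?_⟩
  intro j
  have key : ∀ h : Fin H,
      binderLoss n a b (c h) (fun i => if i = σ then (j:ℕ) else lab i)
        = binderLoss n a b (c h) dl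
          + (b * ((T j).card : ℝ)
              - (a+b) * (((T j).filter (fun i => c h i = c h σ)).card : ℝ)) := by
    intro h
    apply binder_diff n a b (c h) σ (T j) (hnotin j)
    · intro i hi; simp [hdl, hi]
    · intro i hi
      simp only [if_pos rfl, if_neg hi]
      rw [eq_comm]; exact fact1 i hi j
    · intro i hi
      simp only [hdl, if_pos rfl, if_neg hi]
      intro e
      have hmem : i ∈ T (Fin.last q) := (fact1 i hi (Fin.last q)).mp e.symm
      rw [hlast] at hmem; exact absurd hmem (Finset.notMem_empty i)
  rw [Finset.sum_congr rfl (fun h _ => key h), Finset.sum_add_distrib]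
  rw [Finset.sum_sub_distrib, Finset.sum_const, ← Finset.mul_sum]
  simp only [Finset.card_univ, Fintype.card_fin, nsmul_eq_mul]
  ring
end

section
/- Let c⁽¹⁾,…,c⁽ᴴ⁾ be clusterings of {1,…,n}, let σ ∈ {1,…,n}, and let ĉ be a clustering of {1,…,n}∖{σ} with clusters T₁,…,T_q; set T_{q+1} = ∅. For 1 ≤ j ≤ q+1, let ρ̂_j denote the partition of {1,…,n} obtained from ĉ by adding σ to T_j (to a new singleton cluster when j = q+1), and let ρ⁽ʰ⁾ be the partition induced by c⁽ʰ⁾. Define f(m) = m·log₂(m) − (m−1)·log₂(m−1) for integers m ≥ 1 (so f(1) = 0). Then for any weights a > 0 and b > 0 there is a constant K, not depending on j, such that for every j, (1/H)·Σ_{h=1}^H L_GVI(ρ⁽ʰ⁾, ρ̂_j) = K + (1/(n·H))·( b·H·f(|T_j| + 1) − (a+b)·Σ_{h=1}^H f(m_{h,j} + 1) ), where m_{h,j} = |{ i ∈ T_j : c_i⁽ʰ⁾ = c_σ⁽ʰ⁾ }|. -/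
open Finset

/-- The partition induced by cluster labels `c`: the nonempty fibers of `c`. -/
def inducedPartition {n : ℕ} (c : Fin n → ℕ) : Finset (Finset (Fin n)) :=
  Finset.univ.image (fun i => Finset.univ.filter (fun j => c j = c i))

/-- `f(m) = m·log₂ m - (m-1)·log₂(m-1)` (so `f 1 = 0`, using the convention `0·log₂ 0 = 0`). -/
noncomputable def flog (m : ℕ) : ℝ :=
  (m : ℝ) * Real.logb 2 (m : ℝ) - ((m - 1 : ℕ) : ℝ) * Real.logb 2 ((m - 1 : ℕ) : ℝ)

noncomputable def phi (x : ℝ) : ℝ := x * Real.logb 2 x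

lemma phi_zero : phi 0 = 0 := zero_mul _

lemma flog_succ (m : ℕ) : flog (m + 1) = phi ((m + 1 : ℕ) : ℝ) - phi ((m : ℕ) : ℝ) := by
  simp only [flog, phi, Nat.add_sub_cancel]

lemma ent_form {n : ℕ} {ι : Type*} (s : Finset ι) (g : ι → ℕ) (hn : 0 < n)
    (hsum : ∑ i ∈ s, ((g i : ℝ)) = n) :
    - ∑ i ∈ s, ((g i : ℝ)/n) * Real.logb 2 ((g i : ℝ)/n)
      = Real.logb 2 n - (1/n) * ∑ i ∈ s, phi ((g i : ℕ) : ℝ) := by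
  have hn' : (n : ℝ) ≠ 0 := by positivity
  have hterm : ∀ m : ℕ, ((m:ℝ)/n) * Real.logb 2 ((m:ℝ)/n)
      = (1/n) * phi (m : ℝ) - ((m:ℝ)/n) * Real.logb 2 n := by
    intro m
    rcases Nat.eq_zero_or_pos m with hm | hm
    · subst hm; simp [phi]
    · rw [Real.logb_div (by positivity) hn']
      unfold phi; ring
  rw [Finset.sum_congr rfl (fun i _ => hterm (g i)), Finset.sum_sub_distrib,
    ← Finset.mul_sum, ← Finset.sum_mul, ← Finset.sum_div, hsum, div_self hn']
  ring


lemma ent_form2 {n : ℕ} {ι κ : Type*} (s : Finset ι) (t : Finset κ) (g : ι → κ → ℕ)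
    (hn : 0 < n) (hsum : ∑ i ∈ s, ∑ u ∈ t, ((g i u : ℝ)) = n) :
    - ∑ i ∈ s, ∑ u ∈ t, ((g i u : ℝ)/n) * Real.logb 2 ((g i u : ℝ)/n)
      = Real.logb 2 n - (1/n) * ∑ i ∈ s, ∑ u ∈ t, phi ((g i u : ℕ) : ℝ) := by
  have hn' : (n : ℝ) ≠ 0 := by positivity
  have hterm : ∀ m : ℕ, ((m:ℝ)/n) * Real.logb 2 ((m:ℝ)/n)
      = (1/n) * phi (m : ℝ) - ((m:ℝ)/n) * Real.logb 2 n := by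
    intro m
    rcases Nat.eq_zero_or_pos m with hm | hm
    · subst hm; simp [phi]
    · rw [Real.logb_div (by positivity) hn']
      unfold phi; ring
  rw [Finset.sum_congr rfl (fun i _ => Finset.sum_congr rfl (fun u _ => hterm (g i u)))]
  simp only [Finset.sum_sub_distrib]
  simp only [← Finset.mul_sum, ← Finset.sum_mul, ← Finset.sum_div]
  rw [hsum, div_self hn']
  ring

lemma IsPartition.sum_card {n : ℕ} {ρ : Finset (Finset (Fin n))} (h : IsPartition ρ) :
    ∑ S ∈ ρ, S.card = n := by
  obtain ⟨-, hdisj, hcover⟩ := h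
  rw [← Finset.card_biUnion hdisj]
  have h2 : (ρ.biUnion fun x => x) = Finset.univ := by
    ext i
    simp only [Finset.mem_biUnion, Finset.mem_univ, iff_true]
    exact hcover i
  rw [h2, Finset.card_univ, Fintype.card_fin]

lemma induced_isPartition {n : ℕ} (c : Fin n → ℕ) : IsPartition (inducedPartition c) := by
  refine ⟨?_, ?_, ?_⟩
  · intro S hS
    obtain ⟨i, -, rfl⟩ := Finset.mem_image.mp hS
    exact ⟨i, Finset.mem_filter.mpr ⟨Finset.mem_univ i, rfl⟩⟩
  · intro S hS U hU hne
    obtain ⟨i, -, rfl⟩ := Finset.mem_image.mp hS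
    obtain ⟨i', -, rfl⟩ := Finset.mem_image.mp hU
    rw [Finset.disjoint_left]
    intro x hx hx'
    apply hne
    have h1 := (Finset.mem_filter.mp hx).2
    have h2 := (Finset.mem_filter.mp hx').2
    have hcc : c i = c i' := h1.symm.trans h2
    ext y
    simp [Finset.mem_filter, hcc]
  · intro i
    exact ⟨_, Finset.mem_image_of_mem _ (Finset.mem_univ i),
      Finset.mem_filter.mpr ⟨Finset.mem_univ i, rfl⟩⟩

lemma fiber_mem {n : ℕ} (c : Fin n → ℕ) (σ : Fin n) :
    Finset.univ.filter (fun i => c i = c σ) ∈ inducedPartition c :=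
  Finset.mem_image.mpr ⟨σ, Finset.mem_univ σ, rfl⟩

lemma mem_sigma_iff {n : ℕ} (c : Fin n → ℕ) (σ : Fin n) {S : Finset (Fin n)}
    (hS : S ∈ inducedPartition c) :
    σ ∈ S ↔ S = Finset.univ.filter (fun i => c i = c σ) := by
  obtain ⟨i, -, rfl⟩ := Finset.mem_image.mp hS
  constructor
  · intro hσ
    have h := (Finset.mem_filter.mp hσ).2
    ext y
    simp only [Finset.mem_filter, Finset.mem_univ, true_and]
    rw [← h]
  · intro hEq
    rw [hEq]
    exact Finset.mem_filter.mpr ⟨Finset.mem_univ σ, rfl⟩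

section
variable {n q : ℕ} (T : Fin (q + 1) → Finset (Fin n)) (σ : Fin n)

lemma T_inj (hlast : T (Fin.last q) = ∅)
    (hdisj : ∀ j k, j ≠ k → Disjoint (T j) (T k))
    (hne : ∀ j, j ≠ Fin.last q → (T j).Nonempty) :
    Function.Injective T := by
  intro j k hjk
  by_contra hne'
  have hd := hdisj j k hne'
  rw [hjk, disjoint_self] at hd
  have hk : k = Fin.last q := by
    by_contra h
    exact (hne k h).ne_empty hd
  have hj : j = Fin.last q := by
    by_contra h
    exact (hne j h).ne_empty (by rw [hjk]; exact hd)
  exact hne' (hj.trans hk.symm)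

lemma sum_over_tau (hlast : T (Fin.last q) = ∅)
    (hdisj : ∀ j k, j ≠ k → Disjoint (T j) (T k))
    (hne : ∀ j, j ≠ Fin.last q → (T j).Nonempty)
    (hnotin : ∀ j, σ ∉ T j)
    (F : ℕ → ℝ) (hF0 : F 0 = 0) (S : Finset (Fin n)) (j : Fin (q + 1)) :
    ∑ U ∈ insert (insert σ (T j)) ((((Finset.univ : Finset (Fin (q+1))).image T).erase ∅).erase (T j)),
        F ((S ∩ U).card)
      = F ((S ∩ T j).card + (if σ ∈ S then 1 else 0)) - F ((S ∩ T j).card)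
        + ∑ k : Fin (q+1), F ((S ∩ T k).card) := by
  have hinj := T_inj T hlast hdisj hne
  set D := ((Finset.univ : Finset (Fin (q+1))).image T).erase ∅ with hD
  have hnotmem : insert σ (T j) ∉ D.erase (T j) := by
    intro hmem
    have hmem' : insert σ (T j) ∈ (Finset.univ : Finset (Fin (q+1))).image T :=
      Finset.mem_of_mem_erase (Finset.mem_of_mem_erase hmem)
    obtain ⟨k, -, hk⟩ := Finset.mem_image.mp hmem'
    exact hnotin k (hk ▸ Finset.mem_insert_self σ (T j))
  rw [Finset.sum_insert hnotmem]
  have hcard : (S ∩ insert σ (T j)).card = (S ∩ T j).card + (if σ ∈ S then 1 else 0) := by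
    by_cases hσ : σ ∈ S
    · rw [if_pos hσ, Finset.inter_comm, Finset.insert_inter_of_mem hσ, Finset.inter_comm,
        Finset.card_insert_of_notMem (fun h => hnotin j (Finset.mem_of_mem_inter_right h))]
    · rw [if_neg hσ, Finset.inter_comm, Finset.insert_inter_of_notMem hσ, Finset.inter_comm,
        Nat.add_zero]
  have hsumD : ∑ U ∈ D, F ((S ∩ U).card) = ∑ k : Fin (q+1), F ((S ∩ T k).card) := by
    rw [hD, Finset.sum_erase _ (by simp [hF0]),
      Finset.sum_image (fun x _ y _ h => hinj h)]
  have hsumDe : ∑ U ∈ D.erase (T j), F ((S ∩ U).card)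
      = ∑ k : Fin (q+1), F ((S ∩ T k).card) - F ((S ∩ T j).card) := by
    by_cases hj : j = Fin.last q
    · rw [hj, hlast, Finset.erase_eq_of_notMem (Finset.notMem_erase _ _), hsumD]
      simp [hF0]
    · have hmem : T j ∈ D := Finset.mem_erase.mpr ⟨(hne j hj).ne_empty,
        Finset.mem_image_of_mem T (Finset.mem_univ j)⟩
      rw [Finset.sum_erase_eq_sub hmem, hsumD]
  rw [hcard, hsumDe]
  ring

lemma sum_inter_card_s19 (hnotin : ∀ j, σ ∉ T j)
    (hdisj : ∀ j k, j ≠ k → Disjoint (T j) (T k))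
    (hcover : ∀ i : Fin n, i ≠ σ → ∃ j, i ∈ T j)
    (S : Finset (Fin n)) :
    ∑ k : Fin (q+1), (S ∩ T k).card = (S.erase σ).card := by
  rw [← Finset.card_biUnion (fun x _ y hy hxy =>
    (hdisj x y hxy).mono Finset.inter_subset_right Finset.inter_subset_right)]
  congr 1
  ext i
  simp only [Finset.mem_biUnion, Finset.mem_univ, true_and, Finset.mem_inter, Finset.mem_erase]
  constructor
  · rintro ⟨k, hiS, hiT⟩
    exact ⟨fun h => hnotin k (h ▸ hiT), hiS⟩
  · rintro ⟨hne', hiS⟩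
    obtain ⟨k, hk⟩ := hcover i hne'
    exact ⟨k, hiS, hk⟩

end

/-- One-item reallocation shortcut for the generalized variation of information. Let
`c 1, …, c H` be clusterings of `{1,…,n}` inducing partitions `ρₕ`, let `σ` be an item, and let
`T 0, …, T (q-1)` be the clusters of a clustering of `{1,…,n} ∖ {σ}` (with `T q = ∅`, the extra
index standing for a new cluster). Letting `ρ̂ⱼ` be the partition of `{1,…,n}` obtained by adding
`σ` to cluster `T j` (a new singleton cluster when `j = q`), there is a constant `K`, not
depending on `j`, such that for every `j`,
`(1/H)·∑ₕ L_GVI(ρₕ, ρ̂ⱼ) = K + (1/(n·H))·(b·H·f(|T j|+1) - (a+b)·∑ₕ f(m(h,j)+1))`,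
where `m(h,j) = |{i ∈ T j : cₕ i = cₕ σ}|`. -/
theorem gvi_reallocation_shortcut (n H q : ℕ) (hH : 0 < H) (a b : ℝ)
    (ha : 0 < a) (hb : 0 < b)
    (c : Fin H → Fin n → ℕ) (σ : Fin n)
    (T : Fin (q + 1) → Finset (Fin n))
    (hlast : T (Fin.last q) = ∅)
    (hdisj : ∀ j k : Fin (q + 1), j ≠ k → Disjoint (T j) (T k))
    (hne : ∀ j : Fin (q + 1), j ≠ Fin.last q → (T j).Nonempty)
    (hnotin : ∀ j : Fin (q + 1), σ ∉ T j)
    (hcover : ∀ i : Fin n, i ≠ σ → ∃ j : Fin (q + 1), i ∈ T j) :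
    ∃ K : ℝ, ∀ j : Fin (q + 1),
      (1 / H : ℝ) * ∑ h : Fin H,
          gvi a b (inducedPartition (c h))
            (insert (insert σ (T j)) ((((Finset.univ : Finset (Fin (q + 1))).image T).erase ∅).erase (T j)))
        = K + (1 / ((n : ℝ) * H)) * (b * H * flog ((T j).card + 1)
            - (a + b) * ∑ h : Fin H,
                flog ((((T j).filter (fun i => c h i = c h σ)).card) + 1)) := by
  rcases Nat.eq_zero_or_pos n with hn0 | hn
  · exact absurd σ.isLt (by omega)
  have hn' : (n : ℝ) ≠ 0 := by positivity
  have hH' : (H : ℝ) ≠ 0 := by positivity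
  set L := Real.logb 2 n with hL
  set Φ₀ : ℝ := ∑ k : Fin (q + 1), phi (((T k).card : ℕ) : ℝ) with hΦ
  set Ψ : Fin H → ℝ := fun h =>
    ∑ S ∈ inducedPartition (c h), ∑ k : Fin (q + 1), phi (((S ∩ T k).card : ℕ) : ℝ) with hΨ
  refine ⟨(1 / H) * ∑ h : Fin H,
      ((a + b) * (L - (1 / n) * Ψ h) - a * ent (inducedPartition (c h)))
      - b * (L - (1 / n) * Φ₀), ?_⟩
  intro j
  set τj := insert (insert σ (T j))
    ((((Finset.univ : Finset (Fin (q + 1))).image T).erase ∅).erase (T j)) with hτ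
  -- card sums over τj
  have hcards : ∀ S : Finset (Fin n), ∑ U ∈ τj, (((S ∩ U).card : ℕ) : ℝ) = (S.card : ℝ) := by
    intro S
    rw [hτ, sum_over_tau T σ hlast hdisj hne hnotin (fun m => (m : ℝ)) (by norm_num) S j]
    have h1 : ∑ k : Fin (q + 1), (((S ∩ T k).card : ℕ) : ℝ) = ((S.erase σ).card : ℝ) := by
      rw [← Nat.cast_sum, sum_inter_card_s19 T σ hnotin hdisj hcover S]
    rw [h1]
    by_cases hσ : σ ∈ S
    · rw [if_pos hσ, Finset.card_erase_of_mem hσ]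
      have h2 : 1 ≤ S.card := Finset.card_pos.mpr ⟨σ, hσ⟩
      push_cast [h2]
      ring
    · rw [if_neg hσ, Finset.erase_eq_of_notMem hσ]
      push_cast
      ring
  -- entropy of τj
  have hentτ : ent τj = L - (1 / n) * (Φ₀ + flog ((T j).card + 1)) := by
    unfold ent
    rw [ent_form τj (fun U => U.card) hn (by
      have := hcards Finset.univ
      simpa [Finset.univ_inter, Finset.card_univ] using this)]
    have hsum : ∑ U ∈ τj, phi ((U.card : ℕ) : ℝ) = Φ₀ + flog ((T j).card + 1) := by
      have h0 : ∑ U ∈ τj, phi (((Finset.univ ∩ U).card : ℕ) : ℝ)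
          = Φ₀ + flog ((T j).card + 1) := by
        rw [hτ, sum_over_tau T σ hlast hdisj hne hnotin (fun m => phi (m : ℝ))
          (by simp [phi]) Finset.univ j]
        simp only [Finset.univ_inter, Finset.mem_univ, if_pos, flog_succ]
        ring
      simpa [Finset.univ_inter] using h0
    rw [hsum]
  -- joint entropy
  have hjent : ∀ h : Fin H, jent (inducedPartition (c h)) τj
      = L - (1 / n) * (Ψ h + flog ((((T j).filter (fun i => c h i = c h σ)).card) + 1)) := by
    intro h
    have hcard2 : ∑ S ∈ inducedPartition (c h), ∑ U ∈ τj, (((S ∩ U).card : ℕ) : ℝ) = n := by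
      rw [Finset.sum_congr rfl (fun S _ => hcards S), ← Nat.cast_sum,
        (induced_isPartition (c h)).sum_card]
    unfold jent
    rw [ent_form2 (inducedPartition (c h)) τj (fun S U => (S ∩ U).card) hn hcard2]
    have step : ∀ S : Finset (Fin n), ∑ U ∈ τj, phi (((S ∩ U).card : ℕ) : ℝ)
        = (phi ((((S ∩ T j).card + if σ ∈ S then 1 else 0 : ℕ)) : ℝ)
            - phi (((S ∩ T j).card : ℕ) : ℝ))
          + ∑ k : Fin (q + 1), phi (((S ∩ T k).card : ℕ) : ℝ) := by
      intro S
      rw [hτ]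
      exact sum_over_tau T σ hlast hdisj hne hnotin (fun m => phi (m : ℝ)) (by simp [phi]) S j
    have e2 : ∑ S ∈ inducedPartition (c h), ∑ U ∈ τj, phi (((S ∩ U).card : ℕ) : ℝ)
        = Ψ h + flog ((((T j).filter (fun i => c h i = c h σ)).card) + 1) := by
      rw [Finset.sum_congr rfl (fun S _ => step S), Finset.sum_add_distrib]
      have e3 : ∑ S ∈ inducedPartition (c h),
          (phi ((((S ∩ T j).card + if σ ∈ S then 1 else 0 : ℕ)) : ℝ)
            - phi (((S ∩ T j).card : ℕ) : ℝ))
          = flog ((((T j).filter (fun i => c h i = c h σ)).card) + 1) := by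
        rw [Finset.sum_eq_single_of_mem _ (fiber_mem (c h) σ)]
        · have hσf : σ ∈ Finset.univ.filter (fun i => c h i = c h σ) :=
            Finset.mem_filter.mpr ⟨Finset.mem_univ σ, rfl⟩
          rw [if_pos hσf]
          have hfc : (Finset.univ.filter (fun i => c h i = c h σ) ∩ T j).card
              = ((T j).filter (fun i => c h i = c h σ)).card := by
            congr 1
            ext i
            simp only [Finset.mem_inter, Finset.mem_filter, Finset.mem_univ, true_and]
            tauto
          rw [hfc, flog_succ]
        · intro S hS hSne
          have hσS : σ ∉ S := fun hs => hSne ((mem_sigma_iff (c h) σ hS).mp hs)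
          rw [if_neg hσS, Nat.add_zero, sub_self]
      rw [e3]
      ring
    rw [e2]
  -- gvi expansion
  have hgvi : ∀ ρ τ' : Finset (Finset (Fin n)),
      gvi a b ρ τ' = (a + b) * jent ρ τ' - a * ent ρ - b * ent τ' := by
    intro ρ τ'
    unfold gvi mi
    ring
  rw [Finset.sum_congr rfl (fun h _ => by rw [hgvi, hjent h, hentτ])]
  set g := flog ((T j).card + 1) with hg
  set mm : Fin H → ℝ := fun h => flog ((((T j).filter (fun i => c h i = c h σ)).card) + 1) with hmm
  have expand : ∀ h : Fin H,
      (a + b) * (L - (1 / n) * (Ψ h + mm h)) - a * ent (inducedPartition (c h))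
        - b * (L - (1 / n) * (Φ₀ + g))
      = ((a + b) * (L - (1 / n) * Ψ h) - a * ent (inducedPartition (c h)))
        + ((-b) * (L - (1 / n) * Φ₀) + (b / n) * g) + (-((a + b) / n)) * mm h := by
    intro h
    ring
  rw [Finset.sum_congr rfl (fun h _ => expand h), Finset.sum_add_distrib,
    Finset.sum_add_distrib, Finset.sum_const, ← Finset.mul_sum, Finset.card_univ,
    Fintype.card_fin, nsmul_eq_mul]
  field_simp
  ring
end
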